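/- arXiv:1612.05412 — 2 statements merged into one kernel-verified Lean document; each statement's English description precedes it below -/
import Mathlib

section
/- Let (X,p,E) be a p-complete, p-semimonotone lattice-normed ordered vector space with p-closed positive cone. If every net (x_α) with 0 ≤ x_α ↑ ≤ x is p-Cauchy, then X is op-continuous. -/
/-- A net `x : A → G` in an ordered additive group order-converges to `0`:
there exist two nonempty downward-directed sets `D₁, D₂` (the ranges of two
decreasing nets) with infimum `0` such that the net is eventually squeezed
between `-y` and `z` for all `y ∈ D₁`, `z ∈ D₂`. -/
def OConv0 {A G : Type} [Preorder A] [AddCommGroup G] [PartialOrder G]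
    (x : A → G) : Prop :=
  ∃ D₁ D₂ : Set G, D₁.Nonempty ∧ D₂.Nonempty ∧
    DirectedOn (· ≥ ·) D₁ ∧ DirectedOn (· ≥ ·) D₂ ∧
    IsGLB D₁ 0 ∧ IsGLB D₂ 0 ∧
    ∀ y ∈ D₁, ∀ z ∈ D₂, ∃ a₀ : A, ∀ a : A, a₀ ≤ a → -y ≤ x a ∧ x a ≤ z

/-- A net `x : A → X` p-converges to `l` if `p (x a - l)` order-converges to `0` in `E`. -/
def PConvTo {A X E : Type} [Preorder A] [AddCommGroup X]
    [AddCommGroup E] [PartialOrder E] (p : X → E) (x : A → X) (l : X) : Prop :=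
  OConv0 (fun a => p (x a - l))

/-- A net p-converges to `0`. -/
def PConv0 {A X E : Type} [Preorder A] [AddCommGroup X]
    [AddCommGroup E] [PartialOrder E] (p : X → E) (x : A → X) : Prop :=
  OConv0 (fun a => p (x a))

/-- A set `S ⊆ X` is p-closed: p-limits of nets in `S` belong to `S`. -/
def PClosed {X E : Type} [AddCommGroup X] [AddCommGroup E] [PartialOrder E]
    (p : X → E) (S : Set X) : Prop :=
  ∀ (A : Type) [Preorder A] [Nonempty A] [IsDirected A (· ≤ ·)]
    (a : A → X) (x : X), (∀ i, a i ∈ S) → PConvTo p a x → x ∈ S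

/-- A net is p-Cauchy if the double net `x α - x α'` p-converges to `0`. -/
def PCauchy {A X E : Type} [Preorder A] [AddCommGroup X]
    [AddCommGroup E] [PartialOrder E] (p : X → E) (x : A → X) : Prop :=
  OConv0 (fun q : A × A => p (x q.1 - x q.2))

/-- `X` is op-continuous: order convergence to `0` in `X` implies p-convergence to `0`. -/
def OpCont {X E : Type} [AddCommGroup X] [PartialOrder X]
    [AddCommGroup E] [PartialOrder E] (p : X → E) : Prop :=
  ∀ (A : Type) [Preorder A] [Nonempty A] [IsDirected A (· ≤ ·)] (x : A → X),
    OConv0 x → PConv0 p x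

/-- `X` is p-complete: every p-Cauchy net p-converges. -/
def PComplete {X E : Type} [AddCommGroup X]
    [AddCommGroup E] [PartialOrder E] (p : X → E) : Prop :=
  ∀ (A : Type) [Preorder A] [Nonempty A] [IsDirected A (· ≤ ·)] (x : A → X),
    PCauchy p x → ∃ l : X, PConvTo p x l

/-- `X` is a p-Levi space: every p-bounded increasing net in `X⁺` p-converges. -/
def PLevi {X E : Type} [AddCommGroup X] [PartialOrder X]
    [AddCommGroup E] [PartialOrder E] (p : X → E) : Prop :=
  ∀ (A : Type) [Preorder A] [Nonempty A] [IsDirected A (· ≤ ·)] (x : A → X),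
    (∀ a, 0 ≤ x a) → Monotone x → (∃ e : E, ∀ a, p (x a) ≤ e) →
    ∃ l : X, PConvTo p x l

/-!
If `x_α` order-converges to `0`, squeezed as `-y ≤ x_α ≤ z` with `y ↓ 0` and `z ↓ 0`, then
semimonotonicity and the triangle inequality give `p x_α ≤ 2M • p (y + z)`, so it suffices that
`p w → 0` along every net `w ↓ 0`. Such a net p-converges: `w α₀ - w` increases inside
`[0, w α₀]`, so it is p-Cauchy and p-completeness applies. As the positive cone is p-closed, the
limit `u` of `w` satisfies `0 ≤ u ≤ w α` for every `α`, whence `u = 0`.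
-/

open Pointwise

section OrderedGroup

variable {G : Type} [AddCommGroup G] [PartialOrder G] [AddLeftMono G]

theorem DirectedOn.add_ge {F F' : Set G} (hF : DirectedOn (· ≥ ·) F)
    (hF' : DirectedOn (· ≥ ·) F') : DirectedOn (· ≥ ·) (F + F') := by
  rintro _ ⟨f₁, hf₁, f₁', hf₁', rfl⟩ _ ⟨f₂, hf₂, f₂', hf₂', rfl⟩
  obtain ⟨f, hf, h₁, h₂⟩ := hF f₁ hf₁ f₂ hf₂
  obtain ⟨f', hf', h₁', h₂'⟩ := hF' f₁' hf₁' f₂' hf₂'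
  exact ⟨f + f', ⟨f, hf, f', hf', rfl⟩, add_le_add h₁ h₁', add_le_add h₂ h₂'⟩

theorem isGLB_zero_add {F F' : Set G} (hF : IsGLB F 0) (hF' : IsGLB F' 0) :
    IsGLB (F + F') 0 := by
  refine ⟨?_, fun b hb => hF'.2 fun f' hf' => sub_nonpos.1 (hF.2 fun f hf => ?_)⟩
  · rintro _ ⟨f, hf, f', hf', rfl⟩
    exact add_nonneg (hF.1 hf) (hF'.1 hf')
  · exact sub_le_iff_le_add.2 (hb ⟨f, hf, f', hf', rfl⟩)

theorem isGLB_zero_nsmul_image {F : Set G} (hne : F.Nonempty) (hdir : DirectedOn (· ≥ ·) F)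
    (hglb : IsGLB F 0) (n : ℕ) : IsGLB ((n • ·) '' F) 0 := by
  induction n with
  | zero =>
    simp only [zero_nsmul, hne.image_const]
    exact isGLB_singleton
  | succ n ih =>
    refine ⟨?_, fun b hb => (isGLB_zero_add ih hglb).2 ?_⟩
    · rintro _ ⟨f, hf, rfl⟩
      exact nsmul_nonneg (hglb.1 hf) _
    · rintro _ ⟨_, ⟨f₁, hf₁, rfl⟩, f₂, hf₂, rfl⟩
      obtain ⟨f, hf, h₁, h₂⟩ := hdir f₁ hf₁ f₂ hf₂
      calc b ≤ (n + 1) • f := hb ⟨f, hf, rfl⟩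
        _ = n • f + f := succ_nsmul f n
        _ ≤ n • f₁ + f₂ := add_le_add (nsmul_le_nsmul_right h₁ n) h₂

end OrderedGroup

instance Set.Ici.isDirected_le {A : Type} [Preorder A] [IsDirected A (· ≤ ·)] (a : A) :
    IsDirected (Set.Ici a) (· ≤ ·) where
  directed b c := by
    obtain ⟨d, hbd, hcd⟩ := directed_of (· ≤ ·) (b : A) c
    exact ⟨⟨d, b.2.trans hbd⟩, hbd, hcd⟩

section OConv0

variable {A G : Type} [Preorder A] [AddCommGroup G] [PartialOrder G] {x : A → G}

theorem OConv0.comp {B : Type} [Preorder B] (h : OConv0 x) {e : B → A} (he : Monotone e)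
    (hcofinal : ∀ a, ∃ b, a ≤ e b) : OConv0 (x ∘ e) := by
  obtain ⟨D₁, D₂, h₁, h₂, h₃, h₄, h₅, h₆, hsq⟩ := h
  refine ⟨D₁, D₂, h₁, h₂, h₃, h₄, h₅, h₆, fun y hy z hz => ?_⟩
  obtain ⟨a₀, ha₀⟩ := hsq y hy z hz
  obtain ⟨b₀, hb₀⟩ := hcofinal a₀
  exact ⟨b₀, fun b hb => ha₀ _ (hb₀.trans (he hb))⟩

theorem oConv0_restrict_Ici_iff [IsDirected A (· ≤ ·)] (a₀ : A) :
    OConv0 (fun b : Set.Ici a₀ => x b) ↔ OConv0 x := by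
  refine ⟨fun ⟨D₁, D₂, h₁, h₂, h₃, h₄, h₅, h₆, hsq⟩ => ?_, fun h => ?_⟩
  · refine ⟨D₁, D₂, h₁, h₂, h₃, h₄, h₅, h₆, fun y hy z hz => ?_⟩
    obtain ⟨b₀, hb₀⟩ := hsq y hy z hz
    exact ⟨b₀, fun a ha => hb₀ ⟨a, b₀.2.trans ha⟩ ha⟩
  · refine h.comp (fun _ _ hbc => hbc) fun a => ?_
    obtain ⟨b, hab, hb⟩ := directed_of (· ≤ ·) a a₀
    exact ⟨⟨b, hb⟩, hab⟩

theorem OConv0.exists_eventually_le (h : OConv0 x) :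
    ∃ F : Set G, F.Nonempty ∧ DirectedOn (· ≥ ·) F ∧ IsGLB F 0 ∧
      ∀ f ∈ F, ∃ a₀, ∀ a, a₀ ≤ a → x a ≤ f := by
  obtain ⟨D₁, D₂, ⟨y, hy⟩, h₂, -, h₄, -, h₆, hsq⟩ := h
  exact ⟨D₂, h₂, h₄, h₆, fun z hz =>
    (hsq y hy z hz).imp fun _ ha₀ a ha => (ha₀ a ha).2⟩

theorem OConv0.of_nonneg_of_eventually_le (h0 : ∀ a, 0 ≤ x a) {F : Set G} (hne : F.Nonempty)
    (hdir : DirectedOn (· ≥ ·) F) (hglb : IsGLB F 0)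
    (hle : ∀ f ∈ F, ∃ a₀, ∀ a, a₀ ≤ a → x a ≤ f) : OConv0 x := by
  refine ⟨{0}, F, Set.singleton_nonempty 0, hne, directedOn_singleton 0, hdir,
    isGLB_singleton, hglb, ?_⟩
  rintro y rfl z hz
  exact (hle z hz).imp fun _ ha₀ a ha => ⟨by simpa using h0 a, ha₀ a ha⟩

end OConv0

section LatticeNormed

variable {X E : Type} [AddCommGroup X] [AddCommGroup E] [PartialOrder E] {p : X → E}

theorem PConvTo.const_sub (hp_neg : ∀ v, p (-v) = p v) {A : Type} [Preorder A] {w : A → X}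
    {u : X} (h : PConvTo p w u) (c : X) : PConvTo p (fun a => c - w a) (c - u) := by
  unfold PConvTo at h ⊢
  simpa only [sub_sub_sub_cancel_left, ← neg_sub (w _) u, hp_neg] using h

variable [PartialOrder X] [AddLeftMono X]

def MonotoneBoundedPCauchy (p : X → E) : Prop :=
  ∀ (A : Type) [Preorder A] [Nonempty A] [IsDirected A (· ≤ ·)] (xα : A → X) (x : X),
    (∀ a, 0 ≤ xα a) → Monotone xα → (∀ a, xα a ≤ x) → PCauchy p xα

variable {A : Type} [Preorder A] [IsDirected A (· ≤ ·)] {w : A → X}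

theorem PConvTo.le_of_antitone (hp_neg : ∀ v, p (-v) = p v)
    (hclosed : PClosed p {x : X | 0 ≤ x}) (hw : Antitone w) {u : X} (h : PConvTo p w u)
    (a : A) : u ≤ w a := by
  have htail : PConvTo p (fun b : Set.Ici a => w b) u := (oConv0_restrict_Ici_iff a).2 h
  exact sub_nonneg.1 <| hclosed _ _ _ (fun b => sub_nonneg.2 (hw b.2)) (htail.const_sub hp_neg _)

theorem exists_pConvTo_of_antitone [Nonempty A] (hp_neg : ∀ v, p (-v) = p v)
    (hcomplete : PComplete p) (hCauchy : MonotoneBoundedPCauchy p) (hw : Antitone w)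
    (h0 : ∀ a, 0 ≤ w a) : ∃ u, PConvTo p w u := by
  obtain ⟨a₀⟩ := ‹Nonempty A›
  obtain ⟨l, hl⟩ := hcomplete (Set.Ici a₀) (fun b => w a₀ - w b) <|
    hCauchy _ _ (w a₀) (fun b => sub_nonneg.2 (hw b.2))
      (fun _ _ hbc => sub_le_sub_left (hw hbc) _) (fun b => sub_le_self _ (h0 b))
  refine ⟨w a₀ - l, (oConv0_restrict_Ici_iff a₀).1 ?_⟩
  simpa only [PConvTo, sub_sub_cancel] using hl.const_sub hp_neg (w a₀)

theorem pConv0_of_antitone_of_isGLB [Nonempty A] (hp_neg : ∀ v, p (-v) = p v)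
    (hcomplete : PComplete p) (hclosed : PClosed p {x : X | 0 ≤ x})
    (hCauchy : MonotoneBoundedPCauchy p) (hw : Antitone w) (hglb : IsGLB (Set.range w) 0) :
    PConv0 p w := by
  have h0 : ∀ a, 0 ≤ w a := fun a => hglb.1 ⟨a, rfl⟩
  obtain ⟨u, hu⟩ := exists_pConvTo_of_antitone hp_neg hcomplete hCauchy hw h0
  have hu0 : u = 0 := le_antisymm
    (hglb.2 (Set.forall_mem_range.2 (hu.le_of_antitone hp_neg hclosed hw)))
    (hclosed A w u h0 hu)
  subst hu0
  simpa only [PConvTo, PConv0, sub_zero] using hu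

theorem exists_dominating_of_isGLB_zero (hp_neg : ∀ v, p (-v) = p v)
    (hcomplete : PComplete p) (hclosed : PClosed p {x : X | 0 ≤ x})
    (hCauchy : MonotoneBoundedPCauchy p) {D : Set X} (hne : D.Nonempty)
    (hdir : DirectedOn (· ≥ ·) D) (hglb : IsGLB D 0) :
    ∃ F : Set E, F.Nonempty ∧ DirectedOn (· ≥ ·) F ∧ IsGLB F 0 ∧ ∀ f ∈ F, ∃ w ∈ D, p w ≤ f := by
  have : Nonempty (↥D)ᵒᵈ := hne.to_subtype
  have : IsCodirectedOrder D := hdir.isCodirectedOrder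
  have hrange : Set.range (fun i : (↥D)ᵒᵈ => ((OrderDual.ofDual i : D) : X)) = D := by
    ext; simp
  obtain ⟨F, hne, hFdir, hFglb, hF⟩ := (pConv0_of_antitone_of_isGLB hp_neg hcomplete hclosed
    hCauchy (fun _ _ hij => hij) (hrange ▸ hglb)).exists_eventually_le
  refine ⟨F, hne, hFdir, hFglb, fun f hf => ?_⟩
  obtain ⟨i, hi⟩ := hF f hf
  exact ⟨_, (OrderDual.ofDual i).2, hi i le_rfl⟩

end LatticeNormed

section Seminorm

variable {X E : Type} [AddCommGroup X] [Module ℝ X] [AddCommGroup E] [Module ℝ E] {p : X → E}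

theorem neg_invariant_of_smul (hp_smul : ∀ (c : ℝ) (x : X), p (c • x) = |c| • p x) (v : X) :
    p (-v) = p v := by
  rw [← neg_one_smul ℝ v, hp_smul, abs_neg, abs_one, one_smul]

theorem smul_le_nsmul_of_le [PartialOrder E] [AddLeftMono E] (hp_nonneg : ∀ x, 0 ≤ p x)
    (hp_smul : ∀ (c : ℝ) (x : X), p (c • x) = |c| • p x) {c : ℝ} {n : ℕ} (hcn : c ≤ n)
    (v : X) : c • p v ≤ n • p v := by
  have h : 0 ≤ ((n : ℝ) - c) • p v := by
    simpa only [hp_smul, abs_of_nonneg (sub_nonneg.2 hcn)] using hp_nonneg (((n : ℝ) - c) • v)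
  rwa [sub_smul, sub_nonneg, Nat.cast_smul_eq_nsmul] at h

theorem le_nsmul_of_neg_le_of_le [PartialOrder X] [AddLeftMono X] [PartialOrder E]
    [AddLeftMono E]
    (hp_nonneg : ∀ x, 0 ≤ p x) (hp_smul : ∀ (c : ℝ) (x : X), p (c • x) = |c| • p x)
    (hp_add : ∀ x y, p (x + y) ≤ p x + p y) {M : ℝ}
    (hsemi : ∀ x y : X, 0 ≤ y → y ≤ x → p y ≤ M • p x) {n : ℕ} (hMn : M ≤ n)
    {x y z : X} (hy : 0 ≤ y) (hz : 0 ≤ z) (hyx : -y ≤ x) (hxz : x ≤ z) :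
    p x ≤ (n + n) • p (y + z) := by
  have hxy : p (x + y) ≤ M • p (y + z) :=
    hsemi _ _ (neg_le_iff_add_nonneg.1 hyx) (by rw [add_comm y z]; exact add_le_add_left hxz y)
  have hy' : p y ≤ M • p (y + z) := hsemi _ _ hy (le_add_of_nonneg_right hz)
  have hMn' := smul_le_nsmul_of_le hp_nonneg hp_smul hMn (y + z)
  calc p x = p (x + y + -y) := by rw [add_neg_cancel_right]
    _ ≤ p (x + y) + p y := (hp_add _ _).trans_eq (by rw [neg_invariant_of_smul hp_smul])
    _ ≤ n • p (y + z) + n • p (y + z) := add_le_add (hxy.trans hMn') (hy'.trans hMn')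
    _ = (n + n) • p (y + z) := (add_nsmul _ _ _).symm

end Seminorm

theorem stmt7_general {X E : Type}
    [AddCommGroup X] [PartialOrder X] [CovariantClass X X (· + ·) (· ≤ ·)] [Module ℝ X]
    [AddCommGroup E] [Lattice E] [CovariantClass E E (· + ·) (· ≤ ·)] [Module ℝ E]
    (p : X → E)
    (hp_nonneg : ∀ x, 0 ≤ p x)
    (hp_smul : ∀ (c : ℝ) (x : X), p (c • x) = |c| • p x)
    (hp_add : ∀ x y, p (x + y) ≤ p x + p y)
    (M : ℝ)
    (hsemi : ∀ x y : X, 0 ≤ y → y ≤ x → p y ≤ M • p x)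
    (hcomplete : PComplete p)
    (hclosed : PClosed p {x : X | 0 ≤ x})
    (hCauchy : ∀ (A : Type) [Preorder A] [Nonempty A] [IsDirected A (· ≤ ·)]
      (xα : A → X) (x : X),
      (∀ a, 0 ≤ xα a) → Monotone xα → (∀ a, xα a ≤ x) → PCauchy p xα) :
    OpCont p := by
  intro A _ _ _ x ⟨D₁, D₂, hD₁, hD₂, hdir₁, hdir₂, hglb₁, hglb₂, hsq⟩
  obtain ⟨F, hF, hFdir, hFglb, hFdom⟩ := exists_dominating_of_isGLB_zero
    (neg_invariant_of_smul hp_smul) hcomplete hclosed hCauchy (hD₁.add hD₂)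
    (hdir₁.add_ge hdir₂) (isGLB_zero_add hglb₁ hglb₂)
  obtain ⟨n, hMn⟩ := exists_nat_ge M
  refine OConv0.of_nonneg_of_eventually_le (fun a => hp_nonneg _) (hF.image ((n + n) • ·))
    (hFdir.mono_comp fun _ _ h => nsmul_le_nsmul_right h _)
    (isGLB_zero_nsmul_image hF hFdir hFglb (n + n)) ?_
  rintro _ ⟨f, hf, rfl⟩
  obtain ⟨_, ⟨y, hy, z, hz, rfl⟩, hyz⟩ := hFdom f hf
  obtain ⟨a₀, ha₀⟩ := hsq y hy z hz
  refine ⟨a₀, fun a ha => ?_⟩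
  calc p (x a) ≤ (n + n) • p (y + z) :=
        le_nsmul_of_neg_le_of_le hp_nonneg hp_smul hp_add hsemi hMn (hglb₁.1 hy) (hglb₂.1 hz)
          (ha₀ a ha).1 (ha₀ a ha).2
    _ ≤ (n + n) • f := nsmul_le_nsmul_right hyz _

/-- in a p-complete p-semimonotone LNOVS with p-closed positive cone
(over Dedekind complete `E`), if every net `0 ≤ x_α ↑ ≤ x` is p-Cauchy, then `X` is
op-continuous. -/
theorem stmt7 {X E : Type}
    [AddCommGroup X] [PartialOrder X] [CovariantClass X X (· + ·) (· ≤ ·)] [Module ℝ X]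
    [AddCommGroup E] [Lattice E] [CovariantClass E E (· + ·) (· ≤ ·)] [Module ℝ E]
    (hE : ∀ S : Set E, S.Nonempty → BddAbove S → ∃ s, IsLUB S s)
    (p : X → E)
    (hp_nonneg : ∀ x, 0 ≤ p x)
    (hp_zero : ∀ x, p x = 0 ↔ x = 0)
    (hp_smul : ∀ (c : ℝ) (x : X), p (c • x) = |c| • p x)
    (hp_add : ∀ x y, p (x + y) ≤ p x + p y)
    (M : ℝ)
    (hsemi : ∀ x y : X, 0 ≤ y → y ≤ x → p y ≤ M • p x)
    (hcomplete : PComplete p)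
    (hclosed : PClosed p {x : X | 0 ≤ x})
    (hCauchy : ∀ (A : Type) [Preorder A] [Nonempty A] [IsDirected A (· ≤ ·)]
      (xα : A → X) (x : X),
      (∀ a, 0 ≤ xα a) → Monotone xα → (∀ a, xα a ≤ x) → PCauchy p xα) :
    OpCont p :=
  stmt7_general p hp_nonneg hp_smul hp_add M hsemi hcomplete hclosed hCauchy
end

section
/- Let (𝒴, p, *E) be an internal lattice-normed vector lattice (𝒴 a vector lattice, p a lattice norm: |x| ≤ |y| implies p(x) ≤ p(y)). Then the quotient 𝒴̄ = fin(𝒴)/n(𝒴) with norm p̄([x]) = inf_E{e ∈ E : e ≥ p(x)} is a lattice-normed vector lattice: 𝒴̄ is a vector lattice and |[κ]| ≤ |[ξ]| implies p̄([κ]) ≤ p̄([ξ]). -/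
open Filter

/-- The hyperfinite extension filter: we realize the nonstandard extension `*Z` of a
standard set `Z` as the ultrapower `Germ (hyperfilter ℕ) Z`. -/
notation "γ*" Z => Germ ((hyperfilter ℕ : Ultrafilter ℕ) : Filter ℕ) Z

/-- `fin(*E)`: elements of `*E` dominated by a standard element of `E`. -/
def finE {E : Type} [AddCommGroup E] [Lattice E] : Set (γ* E) :=
  {e | ∃ u : E, |e| ≤ (↑u : γ* E)}

/-- `η(*E)`: elements of `*E` whose set of standard dominants has infimum `0` in `E`. -/
def etaE {E : Type} [AddCommGroup E] [Lattice E] : Set (γ* E) :=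
  {e | IsGLB {u : E | |e| ≤ ((↑u : γ* E))} (0 : E)}

/-!
Write `U x = {u ∈ E : x ≤ u}` for the set of standard upper bounds of `x ∈ *E`, so that
`η(*E) = {x : inf U |x| = 0}`. Since `U` is antitone, `η(*E)` is solid; since
`U x + U y ⊆ U (x + y)` and infima of sets add up (`IsGLB.add`), it is closed under addition,
hence under multiplication by natural numbers. The set `n(𝒴)` is the preimage of `η(*E)` under
`*q`, which is monotone and subadditive with `*q (c • κ) ≤ ⌈|c|⌉ • *q κ`, so `n(𝒴)` inherits
all of this. Finally `|κ| ≤ |ξ| + d` gives `U (*q ξ) + U (*q d) ⊆ U (*q κ)`, whence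
`p̄ κ ≤ p̄ ξ + inf U (*q d) = p̄ ξ`.
-/

open scoped Pointwise

-- Mathlib only derives this from `IsOrderedAddMonoid β`.
instance Filter.Germ.instAddLeftMono {α β : Type*} {l : Filter α} [Add β] [Preorder β]
    [AddLeftMono β] : AddLeftMono (Germ l β) where
  elim a b c := Germ.inductionOn₃ a b c fun _ _ _ h =>
    Germ.coe_le.2 <| (Germ.coe_le.1 h).mono fun _ hx => add_le_add_right hx _

def stdUpperBounds {E : Type} [LE E] (x : γ* E) : Set E := {u | x ≤ ↑u}

theorem stdUpperBounds_anti {E : Type} [Preorder E] {x y : γ* E} (h : x ≤ y) :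
    stdUpperBounds y ⊆ stdUpperBounds x :=
  fun _ hu => h.trans hu

theorem mem_etaE_iff {E : Type} [AddCommGroup E] [Lattice E] {x : γ* E} :
    x ∈ etaE ↔ IsGLB (stdUpperBounds |x|) 0 := Iff.rfl

theorem etaE_subset_finE {E : Type} [AddCommGroup E] [Lattice E] :
    (etaE : Set (γ* E)) ⊆ finE := by
  intro x hx
  rcases (stdUpperBounds |x|).eq_empty_or_nonempty with hempty | hne
  · rw [mem_etaE_iff, hempty, isGLB_empty_iff] at hx
    refine ⟨0, ?_⟩
    induction x using Germ.inductionOn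
    exact Germ.coe_le.2 (Eventually.of_forall fun _ => hx _)
  · exact hne

section Standard

variable {E : Type} [AddCommGroup E] [Lattice E] [AddLeftMono E]

theorem add_subset_stdUpperBounds (x y : γ* E) :
    stdUpperBounds x + stdUpperBounds y ⊆ stdUpperBounds (x + y) := by
  rintro _ ⟨u, hu, v, hv, rfl⟩
  exact (add_le_add hu hv : x + y ≤ ↑u + ↑v)

theorem zero_mem_lowerBounds_stdUpperBounds_abs (x : γ* E) :
    0 ∈ lowerBounds (stdUpperBounds |x|) :=
  fun _ hu => Germ.const_le_iff.1 ((abs_nonneg x).trans hu)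

theorem zero_mem_etaE : (0 : γ* E) ∈ etaE := by
  refine IsLeast.isGLB ⟨?_, zero_mem_lowerBounds_stdUpperBounds_abs 0⟩
  show |(0 : γ* E)| ≤ 0
  rw [abs_zero]

theorem mem_etaE_of_abs_le {x y : γ* E} (h : |x| ≤ |y|) (hy : y ∈ etaE) : x ∈ etaE :=
  ⟨zero_mem_lowerBounds_stdUpperBounds_abs x,
    fun _ hb => hy.2 (lowerBounds_mono_set (stdUpperBounds_anti h) hb)⟩

theorem add_mem_etaE {x y : γ* E} (hx : x ∈ etaE) (hy : y ∈ etaE) : x + y ∈ etaE := by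
  refine ⟨zero_mem_lowerBounds_stdUpperBounds_abs _, fun b hb => ?_⟩
  have hsub := (add_subset_stdUpperBounds |x| |y|).trans (stdUpperBounds_anti (abs_add_le x y))
  simpa using (hx.add hy).2 (lowerBounds_mono_set hsub hb)

theorem nsmul_mem_etaE {x : γ* E} (hx : x ∈ etaE) : ∀ n : ℕ, n • x ∈ etaE
  | 0 => by rw [zero_nsmul]; exact zero_mem_etaE
  | n + 1 => by rw [succ_nsmul]; exact add_mem_etaE (nsmul_mem_etaE hx n) hx

theorem isGLB_le_of_le_add_etaE {x y d : γ* E} {e₁ e₂ : E} (hd : d ∈ etaE) (h : x ≤ y + |d|)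
    (h₁ : IsGLB (stdUpperBounds x) e₁) (h₂ : IsGLB (stdUpperBounds y) e₂) : e₁ ≤ e₂ := by
  have hsub := (add_subset_stdUpperBounds y |d|).trans (stdUpperBounds_anti h)
  simpa using (h₂.add hd).2 (lowerBounds_mono_set hsub h₁.1)

end Standard

theorem latticeNorm_abs {Y E : Type} [AddCommGroup Y] [Lattice Y] [AddLeftMono Y]
    [PartialOrder E] {q : Y → E} (hq_mono : ∀ x y : Y, |x| ≤ |y| → q x ≤ q y) (y : Y) :
    q |y| = q y :=
  le_antisymm (hq_mono _ _ (abs_abs y).le) (hq_mono _ _ (abs_abs y).ge)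

theorem latticeNorm_le_add_of_abs_le {Y E : Type} [AddCommGroup Y] [Lattice Y] [AddLeftMono Y]
    [Add E] [PartialOrder E] {q : Y → E} (hq_add : ∀ x y, q (x + y) ≤ q x + q y)
    (hq_mono : ∀ x y : Y, |x| ≤ |y| → q x ≤ q y) {x y z : Y} (h : |x| ≤ |y| + |z|) :
    q x ≤ q y + q z :=
  calc q x ≤ q (|y| + |z|) := hq_mono _ _ (h.trans (le_abs_self _))
    _ ≤ q |y| + q |z| := hq_add _ _
    _ = q y + q z := by rw [latticeNorm_abs hq_mono, latticeNorm_abs hq_mono]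

theorem latticeNorm_smul_le_nsmul {Y E : Type} [AddCommGroup Y] [Module ℝ Y]
    [AddCommGroup E] [PartialOrder E] [AddLeftMono E] [Module ℝ E] {q : Y → E}
    (hq_nonneg : ∀ x, 0 ≤ q x) (hq_smul : ∀ (c : ℝ) (x : Y), q (c • x) = |c| • q x)
    {c : ℝ} {n : ℕ} (hc : |c| ≤ n) (y : Y) : q (c • y) ≤ n • q y :=
  calc q (c • y) ≤ q (c • y) + q ((n - |c|) • y) := le_add_of_nonneg_right (hq_nonneg _)
    _ = n • q y := by
      rw [hq_smul, hq_smul, abs_of_nonneg (sub_nonneg.2 hc), ← add_smul, add_sub_cancel,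
        Nat.cast_smul_eq_nsmul]

theorem germ_map_nonneg {Y E : Type} [Zero E] [Preorder E] {q : Y → E}
    (hq_nonneg : ∀ x, 0 ≤ q x) (x : γ* Y) : 0 ≤ Germ.map q x :=
  Germ.inductionOn x fun _ => Germ.coe_le.2 (Eventually.of_forall fun _ => hq_nonneg _)

theorem germ_map_mono {Y E : Type} [AddGroup Y] [Lattice Y] [Preorder E] {q : Y → E}
    (hq_mono : ∀ x y : Y, |x| ≤ |y| → q x ≤ q y) {x y : γ* Y} (h : |x| ≤ |y|) :
    Germ.map q x ≤ Germ.map q y :=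
  Germ.inductionOn₂ x y (fun _ _ h => Germ.coe_le.2 ((Germ.coe_le.1 h).mono fun _ =>
    hq_mono _ _)) h

theorem germ_map_le_add_of_abs_le {Y E : Type} [AddCommGroup Y] [Lattice Y]
    [AddLeftMono Y] [Add E] [PartialOrder E] {q : Y → E} (hq_add : ∀ x y, q (x + y) ≤ q x + q y)
    (hq_mono : ∀ x y : Y, |x| ≤ |y| → q x ≤ q y) {x y z : γ* Y} (h : |x| ≤ |y| + |z|) :
    Germ.map q x ≤ Germ.map q y + Germ.map q z :=
  Germ.inductionOn₃ x y z (fun _ _ _ h => Germ.coe_le.2 ((Germ.coe_le.1 h).mono fun _ =>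
    latticeNorm_le_add_of_abs_le hq_add hq_mono)) h

theorem germ_map_smul_le {Y E : Type} [AddCommGroup Y] [Module ℝ Y]
    [AddCommGroup E] [PartialOrder E] [AddLeftMono E] [Module ℝ E] {q : Y → E}
    (hq_nonneg : ∀ x, 0 ≤ q x) (hq_smul : ∀ (c : ℝ) (x : Y), q (c • x) = |c| • q x)
    (c : ℝ) (x : γ* Y) : Germ.map q (c • x) ≤ ⌈|c|⌉₊ • Germ.map q x :=
  Germ.inductionOn x fun _ => Germ.coe_le.2 (Eventually.of_forall fun _ =>
    latticeNorm_smul_le_nsmul hq_nonneg hq_smul (Nat.le_ceil _) _)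

theorem stmt13_general {Y E : Type}
    [AddCommGroup Y] [Lattice Y] [CovariantClass Y Y (· + ·) (· ≤ ·)] [Module ℝ Y]
    [AddCommGroup E] [Lattice E] [CovariantClass E E (· + ·) (· ≤ ·)] [Module ℝ E]
    (q : Y → E)
    (hq_nonneg : ∀ x, 0 ≤ q x)
    (hq_smul : ∀ (c : ℝ) (x : Y), q (c • x) = |c| • q x)
    (hq_add : ∀ x y, q (x + y) ≤ q x + q y)
    (hq_mono : ∀ x y : Y, |x| ≤ |y| → q x ≤ q y) :
    let nY : Set (γ* Y) := {x | Germ.map q x ∈ etaE}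
    let finY : Set (γ* Y) := {x | Germ.map q x ∈ finE}
    -- `n` is a lattice ideal of `fin`, hence the quotient is a vector lattice:
    (nY ⊆ finY) ∧
    (0 ∈ nY) ∧ (∀ κ ξ, κ ∈ nY → ξ ∈ nY → κ + ξ ∈ nY) ∧
    (∀ (c : ℝ) (κ), κ ∈ nY → c • κ ∈ nY) ∧
    (∀ κ ξ : γ* Y, |κ| ≤ |ξ| → ξ ∈ nY → κ ∈ nY) ∧
    -- the quotient norm is a lattice norm:
    (∀ κ ξ : γ* Y, κ ∈ finY → ξ ∈ finY →
      (∃ d ∈ nY, |κ| ≤ |ξ| + d) →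
      ∀ e₁ e₂ : E,
        IsGLB {e : E | Germ.map q κ ≤ (↑e : γ* E)} e₁ →
        IsGLB {e : E | Germ.map q ξ ≤ (↑e : γ* E)} e₂ →
        e₁ ≤ e₂) := by
  intro nY finY
  have abs_map_le {x : γ* Y} {b : γ* E} (h : Germ.map q x ≤ b) : |Germ.map q x| ≤ |b| := by
    rw [abs_of_nonneg (germ_map_nonneg hq_nonneg x)]
    exact h.trans (le_abs_self b)
  have map_zero : Germ.map q (0 : γ* Y) = 0 := by
    show ((q 0 : E) : γ* E) = ↑(0 : E)
    rw [← zero_smul ℝ (0 : Y), hq_smul, abs_zero, zero_smul]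
  refine ⟨fun _ hκ => etaE_subset_finE hκ, ?_, fun κ ξ hκ hξ => ?_, fun c κ hκ => ?_,
    fun κ ξ hle hξ => ?_, ?_⟩
  · show Germ.map q 0 ∈ etaE
    rw [map_zero]
    exact zero_mem_etaE
  · exact mem_etaE_of_abs_le (abs_map_le (germ_map_le_add_of_abs_le hq_add hq_mono
      (abs_add_le κ ξ))) (add_mem_etaE hκ hξ)
  · exact mem_etaE_of_abs_le (abs_map_le (germ_map_smul_le hq_nonneg hq_smul c κ))
      (nsmul_mem_etaE hκ _)
  · exact mem_etaE_of_abs_le (abs_map_le (germ_map_mono hq_mono hle)) hξ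
  · rintro κ ξ - - ⟨d, hd, hle⟩ e₁ e₂ h₁ h₂
    refine isGLB_le_of_le_add_etaE hd ?_ h₁ h₂
    rw [abs_of_nonneg (germ_map_nonneg hq_nonneg d)]
    exact germ_map_le_add_of_abs_le hq_add hq_mono
      (hle.trans (add_le_add_right (le_abs_self d) _))

/-- for an internal lattice-normed vector lattice `(*Y, *q, *E)`, the
quotient `fin/n` is again a lattice-normed vector lattice (stated on representatives):
`n` is a lattice ideal of `fin` (so the quotient is a vector lattice), and the
quotient norm `p̄([x]) = inf_E {e : *q x ≤ e}` is monotone: `|[κ]| ≤ |[ξ]|` (i.e.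
`|κ| ≤ |ξ| + d` for some null `d`) implies `p̄([κ]) ≤ p̄([ξ])`. -/
theorem stmt13 {Y E : Type}
    [AddCommGroup Y] [Lattice Y] [CovariantClass Y Y (· + ·) (· ≤ ·)] [Module ℝ Y]
    [AddCommGroup E] [Lattice E] [CovariantClass E E (· + ·) (· ≤ ·)] [Module ℝ E]
    (hE : ∀ S : Set E, S.Nonempty → BddAbove S → ∃ s, IsLUB S s)
    (q : Y → E)
    (hq_nonneg : ∀ x, 0 ≤ q x)
    (hq_zero : ∀ x, q x = 0 ↔ x = 0)
    (hq_smul : ∀ (c : ℝ) (x : Y), q (c • x) = |c| • q x)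
    (hq_add : ∀ x y, q (x + y) ≤ q x + q y)
    (hq_mono : ∀ x y : Y, |x| ≤ |y| → q x ≤ q y) :
    let nY : Set (γ* Y) := {x | Germ.map q x ∈ etaE}
    let finY : Set (γ* Y) := {x | Germ.map q x ∈ finE}
    -- `n` is a lattice ideal of `fin`, hence the quotient is a vector lattice:
    (nY ⊆ finY) ∧
    (0 ∈ nY) ∧ (∀ κ ξ, κ ∈ nY → ξ ∈ nY → κ + ξ ∈ nY) ∧
    (∀ (c : ℝ) (κ), κ ∈ nY → c • κ ∈ nY) ∧
    (∀ κ ξ : γ* Y, |κ| ≤ |ξ| → ξ ∈ nY → κ ∈ nY) ∧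
    -- the quotient norm is a lattice norm:
    (∀ κ ξ : γ* Y, κ ∈ finY → ξ ∈ finY →
      (∃ d ∈ nY, |κ| ≤ |ξ| + d) →
      ∀ e₁ e₂ : E,
        IsGLB {e : E | Germ.map q κ ≤ (↑e : γ* E)} e₁ →
        IsGLB {e : E | Germ.map q ξ ≤ (↑e : γ* E)} e₂ →
        e₁ ≤ e₂) :=
  stmt13_general q hq_nonneg hq_smul hq_add hq_mono
end
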